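/- arXiv:2304.07797 — 2 statements merged into one kernel-verified Lean document; each statement's English description precedes it below -/
import Mathlib

section
/- Let f_n(x) = β_n/x + μ t_n x and f_{n+1}(x) = β_{n+1}/x + μ t_{n+1} x with all constants positive, and let x_n = sqrt(β_n/(μ t_n)), x_{n+1} = sqrt(β_{n+1}/(μ t_{n+1})). If x_n ≤ x_{n+1}, then the minimum of f_n(F_n) + f_{n+1}(F_{n+1}) over pairs F_n ≥ F_{n+1} > 0 is attained at F_n = F_{n+1} = x* where x* = sqrt((β_n+β_{n+1})/(μ(t_n+t_{n+1}))), and moreover x_n ≤ x* ≤ x_{n+1}. -/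
lemma key_inc (a b x y : ℝ) (hb : 0 < b) (hy : 0 < y) (hxy : y ≤ x) (h : a ≤ b * y ^ 2) :
    a / y + b * y ≤ a / x + b * x := by
  have hx : 0 < x := lt_of_lt_of_le hy hxy
  rw [← sub_nonneg]
  have expand : a / x + b * x - (a / y + b * y) = (x - y) * (b * x * y - a) / (x * y) := by
    field_simp; ring
  rw [expand]
  apply div_nonneg _ (by positivity)
  have h1 : a ≤ b * x * y := by nlinarith [mul_le_mul_of_nonneg_left hxy (mul_pos hb hy).le]
  nlinarith

lemma key_dec (a b x y : ℝ) (hb : 0 < b) (hx : 0 < x) (hxy : x ≤ y) (h : b * y ^ 2 ≤ a) :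
    a / y + b * y ≤ a / x + b * x := by
  have hy : 0 < y := lt_of_lt_of_le hx hxy
  rw [← sub_nonneg]
  have expand : a / x + b * x - (a / y + b * y) = (y - x) * (a - b * x * y) / (x * y) := by
    field_simp; ring
  rw [expand]
  apply div_nonneg _ (by positivity)
  have h1 : b * x * y ≤ a := by nlinarith [mul_le_mul_of_nonneg_left hxy (mul_pos hb hx).le]
  nlinarith

theorem two_term_pooling (βn βn1 tn tn1 μ : ℝ)
    (hβn : 0 < βn) (hβn1 : 0 < βn1) (htn : 0 < tn) (htn1 : 0 < tn1) (hμ : 0 < μ)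
    (xn xn1 xstar : ℝ)
    (hxn : xn = Real.sqrt (βn / (μ * tn)))
    (hxn1 : xn1 = Real.sqrt (βn1 / (μ * tn1)))
    (hxstar : xstar = Real.sqrt ((βn + βn1) / (μ * (tn + tn1))))
    (hle : xn ≤ xn1) :
    (xn ≤ xstar ∧ xstar ≤ xn1) ∧
      ∀ Fn Fn1 : ℝ, Fn1 ≤ Fn → 0 < Fn1 →
        (βn / xstar + μ * tn * xstar) + (βn1 / xstar + μ * tn1 * xstar) ≤
          (βn / Fn + μ * tn * Fn) + (βn1 / Fn1 + μ * tn1 * Fn1) := by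
  have hμtn : 0 < μ * tn := by positivity
  have hμtn1 : 0 < μ * tn1 := by positivity
  have hB : 0 < μ * (tn + tn1) := by positivity
  have hA : 0 < βn + βn1 := by positivity
  have hxnpos : 0 < xn := by rw [hxn]; positivity
  have hxn1pos : 0 < xn1 := by rw [hxn1]; positivity
  have hxspos : 0 < xstar := by rw [hxstar]; positivity
  have hxnsq : xn ^ 2 = βn / (μ * tn) := by
    rw [hxn, Real.sq_sqrt (by positivity)]
  have hxn1sq : xn1 ^ 2 = βn1 / (μ * tn1) := by
    rw [hxn1, Real.sq_sqrt (by positivity)]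
  have hxssq : xstar ^ 2 = (βn + βn1) / (μ * (tn + tn1)) := by
    rw [hxstar, Real.sq_sqrt (by positivity)]
  -- from hle : ratio inequality
  have hratio : βn / (μ * tn) ≤ βn1 / (μ * tn1) := by
    rw [← hxnsq, ← hxn1sq]; nlinarith
  have hcross : βn * (μ * tn1) ≤ βn1 * (μ * tn) := by
    rw [div_le_div_iff₀ hμtn hμtn1] at hratio; linarith
  have h1 : xn ≤ xstar := by
    have : xn ^ 2 ≤ xstar ^ 2 := by
      rw [hxnsq, hxssq, div_le_div_iff₀ hμtn hB]; nlinarith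
    nlinarith
  have h2 : xstar ≤ xn1 := by
    have : xstar ^ 2 ≤ xn1 ^ 2 := by
      rw [hxssq, hxn1sq, div_le_div_iff₀ hB hμtn1]; nlinarith
    nlinarith
  refine ⟨⟨h1, h2⟩, ?_⟩
  intro Fn Fn1 hF hFn1
  have hFn : 0 < Fn := lt_of_lt_of_le hFn1 hF
  have hBxs : βn + βn1 = μ * (tn + tn1) * xstar ^ 2 := by
    rw [hxssq]; field_simp
  have gx : ∀ x : ℝ, 0 < x →
      (βn / x + μ * tn * x) + (βn1 / x + μ * tn1 * x)
        = (βn + βn1) / x + (μ * (tn + tn1)) * x := by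
    intro x hx; field_simp; ring
  have gmin : ∀ x : ℝ, 0 < x →
      (βn + βn1) / xstar + (μ * (tn + tn1)) * xstar ≤
        (βn + βn1) / x + (μ * (tn + tn1)) * x := by
    intro x hx
    rcases le_total xstar x with h | h
    · exact key_inc _ _ _ _ hB hxspos h (le_of_eq hBxs)
    · exact key_dec _ _ _ _ hB hx h (le_of_eq hBxs.symm)
  rw [gx xstar hxspos]
  have hβn_xn : βn = μ * tn * xn ^ 2 := by rw [hxnsq]; field_simp
  have hβn1_xn1 : βn1 = μ * tn1 * xn1 ^ 2 := by rw [hxn1sq]; field_simp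
  rcases le_total xstar Fn1 with hc1 | hc1
  · -- f_n(Fn) ≥ f_n(Fn1), then g(Fn1) ≥ g(xstar)
    have hfn : βn / Fn1 + μ * tn * Fn1 ≤ βn / Fn + μ * tn * Fn := by
      apply key_inc _ _ _ _ hμtn hFn1 hF
      have hxle : xn ≤ Fn1 := le_trans h1 hc1
      have hsq : xn ^ 2 ≤ Fn1 ^ 2 := pow_le_pow_left₀ hxnpos.le hxle 2
      rw [hβn_xn]
      exact mul_le_mul_of_nonneg_left hsq hμtn.le
    calc (βn + βn1) / xstar + μ * (tn + tn1) * xstar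
        ≤ (βn + βn1) / Fn1 + μ * (tn + tn1) * Fn1 := gmin Fn1 hFn1
      _ = (βn / Fn1 + μ * tn * Fn1) + (βn1 / Fn1 + μ * tn1 * Fn1) := (gx Fn1 hFn1).symm
      _ ≤ _ := by linarith
  · rcases le_total Fn xstar with hc2 | hc2
    · -- f_{n+1}(Fn1) ≥ f_{n+1}(Fn), then g(Fn) ≥ g(xstar)
      have hfn1 : βn1 / Fn + μ * tn1 * Fn ≤ βn1 / Fn1 + μ * tn1 * Fn1 := by
        apply key_dec _ _ _ _ hμtn1 hFn1 hF
        have hxle : Fn ≤ xn1 := le_trans hc2 h2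
        have hsq : Fn ^ 2 ≤ xn1 ^ 2 := pow_le_pow_left₀ hFn.le hxle 2
        rw [hβn1_xn1]
        exact mul_le_mul_of_nonneg_left hsq hμtn1.le
      calc (βn + βn1) / xstar + μ * (tn + tn1) * xstar
          ≤ (βn + βn1) / Fn + μ * (tn + tn1) * Fn := gmin Fn hFn
        _ = (βn / Fn + μ * tn * Fn) + (βn1 / Fn + μ * tn1 * Fn) := (gx Fn hFn).symm
        _ ≤ _ := by linarith
    · -- Fn1 ≤ xstar ≤ Fn
      have hfa : βn / xstar + μ * tn * xstar ≤ βn / Fn + μ * tn * Fn := by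
        apply key_inc _ _ _ _ hμtn hxspos hc2
        have hsq : xn ^ 2 ≤ xstar ^ 2 := pow_le_pow_left₀ hxnpos.le h1 2
        rw [hβn_xn]
        exact mul_le_mul_of_nonneg_left hsq hμtn.le
      have hfb : βn1 / xstar + μ * tn1 * xstar ≤ βn1 / Fn1 + μ * tn1 * Fn1 := by
        apply key_dec _ _ _ _ hμtn1 hFn1 hc1
        have hsq : xstar ^ 2 ≤ xn1 ^ 2 := pow_le_pow_left₀ hxspos.le h2 2
        rw [hβn1_xn1]
        exact mul_le_mul_of_nonneg_left hsq hμtn1.le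
      rw [← gx xstar hxspos]
      linarith
end

section
/- Let f_n(x) = β_n/x + μ t_n x, with all β_n, t_n, μ > 0. Suppose the minimizer of ∑_{n=s}^{t} f_n(F_n) over F_s ≥ ... ≥ F_t > 0 is the constant vector with value V1 = sqrt((∑_{n=s}^{t} β_n)/(μ ∑_{n=s}^{t} t_n)), and the minimizer of ∑_{n=t+1}^{l} f_n(F_n) over F_{t+1} ≥ ... ≥ F_l > 0 is the constant vector with value V2 = sqrt((∑_{n=t+1}^{l} β_n)/(μ ∑_{n=t+1}^{l} t_n)). If V1 ≤ V2, then V̄ = sqrt((∑_{n=s}^{l} β_n)/(μ ∑_{n=s}^{l} t_n)) satisfies V1 ≤ V̄ ≤ V2, and the constant vector with value V̄ minimizes ∑_{n=s}^{l} f_n(F_n) over F_s ≥ ... ≥ F_l > 0. -/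
/-!
The block cost `V ↦ ∑ (β n / V + μ t n V)` is convex and its derivative at a constant `V` is
`∑ (μ t n - β n / V²)`. Raising a constant minimizer `V` on an initial segment cannot lower the
cost, so every partial sum `∑_{n=a}^{j} (μ t n V² - β n)` of a minimizing block is nonnegative,
and the full sum vanishes at the square-root value. Conversely, these sign conditions make the
constant optimal: by Abel summation `∑ (μ t n V² - β n) F n ≥ 0` for every nonincreasing `F`,
which together with the tangent-line inequality for `x ↦ b / x + m x` bounds the cost of `F`
from below by that of `V`. For the merged block the partial sums at `V̄` are controlled by those
of the first block at `V1 ≤ V̄` up to `k`, and beyond `k` by the tail sums of the second block at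
`V2 ≥ V̄`.
-/

section BlockCost

open Finset Filter Topology

variable (β t : ℕ → ℝ) (μ : ℝ)

def IsConstMinimizer (a b : ℕ) (V : ℝ) : Prop :=
  ∀ F : ℕ → ℝ, (∀ n ∈ Icc a b, 0 < F n) → (∀ n, a ≤ n → n < b → F (n + 1) ≤ F n) →
    ∑ n ∈ Icc a b, (β n / V + μ * t n * V) ≤ ∑ n ∈ Icc a b, (β n / F n + μ * t n * F n)

def excess (V : ℝ) (a b : ℕ) : ℝ :=
  ∑ n ∈ Icc a b, (μ * t n * V ^ 2 - β n)

/-- The minimizer over `V > 0` of the cost `∑_{n=a}^{b} (β n / V + μ t n V)` of a constant. -/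
noncomputable def blockValue (a b : ℕ) : ℝ :=
  Real.sqrt ((∑ n ∈ Icc a b, β n) / (μ * ∑ n ∈ Icc a b, t n))

variable {β t μ}

lemma sum_Icc_pos {f : ℕ → ℝ} (hf : ∀ n, 0 < f n) {a b : ℕ} (hab : a ≤ b) :
    0 < ∑ n ∈ Icc a b, f n :=
  sum_pos (fun n _ => hf n) (nonempty_Icc.mpr hab)

lemma sum_Icc_add_sum_Icc (f : ℕ → ℝ) {a m b : ℕ} (ham : a ≤ m + 1) (hmb : m ≤ b) :
    ∑ n ∈ Icc a m, f n + ∑ n ∈ Icc (m + 1) b, f n = ∑ n ∈ Icc a b, f n := by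
  simp only [← Ico_add_one_right_eq_Icc]
  exact sum_Ico_consecutive f ham (by omega)

lemma excess_add_excess (V : ℝ) {a m b : ℕ} (ham : a ≤ m + 1) (hmb : m ≤ b) :
    excess β t μ V a m + excess β t μ V (m + 1) b = excess β t μ V a b :=
  sum_Icc_add_sum_Icc _ ham hmb

lemma excess_eq (V : ℝ) (a b : ℕ) :
    excess β t μ V a b = μ * (∑ n ∈ Icc a b, t n) * V ^ 2 - ∑ n ∈ Icc a b, β n := by
  rw [excess, sum_sub_distrib, mul_sum, sum_mul]

lemma excess_mono (hμ : 0 ≤ μ) (ht : ∀ n, 0 ≤ t n) {V W : ℝ} (hV : 0 ≤ V) (hVW : V ≤ W)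
    (a b : ℕ) : excess β t μ V a b ≤ excess β t μ W a b := by
  have : 0 ≤ ∑ n ∈ Icc a b, t n := sum_nonneg fun n _ => ht n
  rw [excess_eq, excess_eq]
  gcongr

lemma le_of_excess_le {a b : ℕ} (hμT : 0 < μ * ∑ n ∈ Icc a b, t n) {V W : ℝ} (hW : 0 ≤ W)
    (h : excess β t μ V a b ≤ excess β t μ W a b) : V ≤ W := by
  rw [excess_eq, excess_eq, sub_le_sub_iff_right, mul_le_mul_iff_right₀ hμT] at h
  exact abs_le_of_sq_le_sq' h hW |>.2

lemma blockValue_pos (hβ : ∀ n, 0 < β n) (ht : ∀ n, 0 < t n) (hμ : 0 < μ) {a b : ℕ}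
    (hab : a ≤ b) : 0 < blockValue β t μ a b :=
  Real.sqrt_pos.mpr (div_pos (sum_Icc_pos hβ hab) (mul_pos hμ (sum_Icc_pos ht hab)))

lemma excess_blockValue (hβ : ∀ n, 0 ≤ β n) (ht : ∀ n, 0 < t n) (hμ : 0 < μ) {a b : ℕ}
    (hab : a ≤ b) : excess β t μ (blockValue β t μ a b) a b = 0 := by
  have hμT : 0 < μ * ∑ n ∈ Icc a b, t n := mul_pos hμ (sum_Icc_pos ht hab)
  have hB : 0 ≤ ∑ n ∈ Icc a b, β n := sum_nonneg fun n _ => hβ n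
  rw [excess_eq, blockValue, Real.sq_sqrt (by positivity), mul_div_cancel₀ _ hμT.ne', sub_self]

lemma IsConstMinimizer.cost_le_of_raise_prefix {a b j : ℕ} {V W : ℝ}
    (hmin : IsConstMinimizer β t μ a b V) (hV : 0 < V) (hVW : V ≤ W) (hjb : j ≤ b) :
    ∑ n ∈ Icc a j, (β n / V + μ * t n * V) ≤ ∑ n ∈ Icc a j, (β n / W + μ * t n * W) := by
  set F : ℕ → ℝ := fun n => if n ≤ j then W else V
  have hcost := hmin F (fun n _ => by simp only [F]; split_ifs <;> linarith)
    (fun n _ _ => by simp only [F]; split_ifs <;> first | rfl | linarith)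
  have hraise : ∑ n ∈ Icc a b, ((β n / F n + μ * t n * F n) - (β n / V + μ * t n * V)) =
      ∑ n ∈ Icc a j, ((β n / W + μ * t n * W) - (β n / V + μ * t n * V)) := by
    rw [← sum_subset (Icc_subset_Icc_right hjb)]
    · exact sum_congr rfl fun n hn => by simp [F, (mem_Icc.mp hn).2]
    · intro n hn hnj
      have : ¬ n ≤ j := fun h => hnj (mem_Icc.mpr ⟨(mem_Icc.mp hn).1, h⟩)
      simp [F, this]
  rw [sum_sub_distrib, sum_sub_distrib] at hraise
  linarith

lemma IsConstMinimizer.excess_nonneg {a b j : ℕ} {V : ℝ} (hmin : IsConstMinimizer β t μ a b V)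
    (hV : 0 < V) (hjb : j ≤ b) : 0 ≤ excess β t μ V a j := by
  set g : ℝ → ℝ := fun W => ∑ n ∈ Icc a j, (μ * t n * V * W - β n)
  have hg : ∀ W, V < W → 0 ≤ g W := by
    intro W hVW
    have hW : 0 < W := hV.trans hVW
    have hdiff : ∑ n ∈ Icc a j, ((β n / W + μ * t n * W) - (β n / V + μ * t n * V)) =
        (W - V) / (V * W) * g W := by
      rw [mul_sum]
      exact sum_congr rfl fun n _ => by field_simp; ring
    have hcost := hmin.cost_le_of_raise_prefix hV hVW.le hjb
    rw [← sub_nonneg, ← sum_sub_distrib, hdiff] at hcost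
    exact (mul_nonneg_iff_of_pos_left (div_pos (sub_pos.mpr hVW) (by positivity))).mp hcost
  have hlim : Tendsto g (𝓝[>] V) (𝓝 (g V)) :=
    ((continuous_finsetSum _ fun n _ => by fun_prop).tendsto V).mono_left nhdsWithin_le_nhds
  have := ge_of_tendsto hlim (eventually_nhdsWithin_of_forall hg)
  simpa [g, excess, sq, mul_assoc] using this

lemma sum_Icc_mul_le_sum_Icc_mul_of_antitone (c F : ℕ → ℝ) {a b : ℕ} (hab : a ≤ b)
    (hc : ∀ j, a ≤ j → j < b → 0 ≤ ∑ n ∈ Icc a j, c n)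
    (hF : ∀ n, a ≤ n → n < b → F (n + 1) ≤ F n) :
    (∑ n ∈ Icc a b, c n) * F b ≤ ∑ n ∈ Icc a b, c n * F n := by
  induction b, hab using Nat.le_induction with
  | base => simp
  | succ b hab ih =>
    have hpartial : (∑ n ∈ Icc a b, c n) * F (b + 1) ≤ (∑ n ∈ Icc a b, c n) * F b :=
      mul_le_mul_of_nonneg_left (hF b hab (by omega)) (hc b hab (by omega))
    have hprev := ih (fun j hj hjb => hc j hj (by omega)) (fun n hn hnb => hF n hn (by omega))
    rw [sum_Icc_succ_top (by omega), sum_Icc_succ_top (by omega), add_mul]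
    linarith

lemma add_tangent_le_div_add_mul {b m V x : ℝ} (hb : 0 ≤ b) (hV : 0 < V) (hx : 0 < x) :
    b / V + m * V + (m * V ^ 2 - b) * (x - V) / V ^ 2 ≤ b / x + m * x := by
  have hgap : b / x + m * x - (b / V + m * V + (m * V ^ 2 - b) * (x - V) / V ^ 2) =
      b * (x - V) ^ 2 / (x * V ^ 2) := by
    field_simp
    ring
  have : 0 ≤ b * (x - V) ^ 2 / (x * V ^ 2) := by positivity
  linarith

lemma isConstMinimizer_of_excess {a b : ℕ} {V : ℝ} (hβ : ∀ n, 0 ≤ β n) (hV : 0 < V) (hab : a ≤ b)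
    (hprefix : ∀ j, a ≤ j → j < b → 0 ≤ excess β t μ V a j) (htotal : excess β t μ V a b = 0) :
    IsConstMinimizer β t μ a b V := by
  intro F hF hFanti
  set c : ℕ → ℝ := fun n => μ * t n * V ^ 2 - β n
  have hc : ∑ n ∈ Icc a b, c n = 0 := htotal
  have habel : 0 ≤ ∑ n ∈ Icc a b, c n * F n := by
    simpa only [hc, zero_mul] using sum_Icc_mul_le_sum_Icc_mul_of_antitone c F hab hprefix hFanti
  have hlinear : ∑ n ∈ Icc a b, c n * (F n - V) / V ^ 2 = (∑ n ∈ Icc a b, c n * F n) / V ^ 2 := by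
    simp only [mul_sub, sub_div, sum_sub_distrib, ← sum_div, ← sum_mul, hc, zero_mul, zero_div,
      sub_zero]
  calc ∑ n ∈ Icc a b, (β n / V + μ * t n * V)
      ≤ ∑ n ∈ Icc a b, (β n / V + μ * t n * V + c n * (F n - V) / V ^ 2) := by
        rw [sum_add_distrib (f := fun n => β n / V + μ * t n * V), hlinear]
        exact le_add_of_nonneg_right (div_nonneg habel (sq_nonneg V))
    _ ≤ ∑ n ∈ Icc a b, (β n / F n + μ * t n * F n) :=
        sum_le_sum fun n hn => add_tangent_le_div_add_mul (hβ n) hV (hF n hn)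

end BlockCost

theorem block_merge_optimal (β t : ℕ → ℝ) (μ : ℝ)
    (hβpos : ∀ n, 0 < β n) (htpos : ∀ n, 0 < t n) (hμ : 0 < μ)
    (s k l : ℕ) (hsk : s ≤ k) (hkl : k < l)
    (V1 V2 Vbar : ℝ)
    (hV1 : V1 = Real.sqrt ((∑ n ∈ Finset.Icc s k, β n) / (μ * ∑ n ∈ Finset.Icc s k, t n)))
    (hV2 : V2 = Real.sqrt ((∑ n ∈ Finset.Icc (k + 1) l, β n) /
      (μ * ∑ n ∈ Finset.Icc (k + 1) l, t n)))
    (hVbar : Vbar = Real.sqrt ((∑ n ∈ Finset.Icc s l, β n) /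
      (μ * ∑ n ∈ Finset.Icc s l, t n)))
    (hmin1 : ∀ F : ℕ → ℝ, (∀ n ∈ Finset.Icc s k, 0 < F n) →
      (∀ n, s ≤ n → n < k → F (n + 1) ≤ F n) →
      ∑ n ∈ Finset.Icc s k, (β n / V1 + μ * t n * V1) ≤
        ∑ n ∈ Finset.Icc s k, (β n / F n + μ * t n * F n))
    (hmin2 : ∀ F : ℕ → ℝ, (∀ n ∈ Finset.Icc (k + 1) l, 0 < F n) →
      (∀ n, k + 1 ≤ n → n < l → F (n + 1) ≤ F n) →
      ∑ n ∈ Finset.Icc (k + 1) l, (β n / V2 + μ * t n * V2) ≤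
        ∑ n ∈ Finset.Icc (k + 1) l, (β n / F n + μ * t n * F n))
    (hV12 : V1 ≤ V2) :
    (V1 ≤ Vbar ∧ Vbar ≤ V2) ∧
      ∀ F : ℕ → ℝ, (∀ n ∈ Finset.Icc s l, 0 < F n) →
        (∀ n, s ≤ n → n < l → F (n + 1) ≤ F n) →
        ∑ n ∈ Finset.Icc s l, (β n / Vbar + μ * t n * Vbar) ≤
          ∑ n ∈ Finset.Icc s l, (β n / F n + μ * t n * F n) := by
  have hβ : ∀ n, 0 ≤ β n := fun n => (hβpos n).le
  have hV1pos : 0 < V1 := by rw [hV1]; exact blockValue_pos hβpos htpos hμ hsk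
  have hV2pos : 0 < V2 := by rw [hV2]; exact blockValue_pos hβpos htpos hμ (by omega)
  have hVbarpos : 0 < Vbar := by rw [hVbar]; exact blockValue_pos hβpos htpos hμ (by omega)
  have h1 : excess β t μ V1 s k = 0 := by rw [hV1]; exact excess_blockValue hβ htpos hμ hsk
  have h2 : excess β t μ V2 (k + 1) l = 0 := by
    rw [hV2]; exact excess_blockValue hβ htpos hμ (by omega)
  have h : excess β t μ Vbar s l = 0 := by
    rw [hVbar]; exact excess_blockValue hβ htpos hμ (by omega)
  have hmono : ∀ {V W : ℝ}, 0 ≤ V → V ≤ W → ∀ a b, excess β t μ V a b ≤ excess β t μ W a b :=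
    excess_mono hμ.le fun n => (htpos n).le
  have hsplit : ∀ V {a m b : ℕ}, a ≤ m + 1 → m ≤ b →
      excess β t μ V a m + excess β t μ V (m + 1) b = excess β t μ V a b :=
    fun V => excess_add_excess V
  have hT : 0 < μ * ∑ n ∈ Finset.Icc s l, t n := mul_pos hμ (sum_Icc_pos htpos (by omega))
  have hV1le : V1 ≤ Vbar := le_of_excess_le hT hVbarpos.le <| by
    linarith [hsplit V1 (by omega : s ≤ k + 1) hkl.le, hmono hV1pos.le hV12 (k + 1) l]
  have hleV2 : Vbar ≤ V2 := le_of_excess_le hT hV2pos.le <| by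
    linarith [hsplit V2 (by omega : s ≤ k + 1) hkl.le, hmono hV1pos.le hV12 s k]
  refine ⟨⟨hV1le, hleV2⟩, isConstMinimizer_of_excess hβ hVbarpos (by omega)
    (fun j hsj hjl => ?_) h⟩
  rcases le_or_gt j k with hjk | hkj
  · exact (IsConstMinimizer.excess_nonneg hmin1 hV1pos hjk).trans (hmono hV1pos.le hV1le s j)
  · linarith [IsConstMinimizer.excess_nonneg hmin2 hV2pos hjl.le,
      hmono hVbarpos.le hleV2 (j + 1) l, hsplit V2 (by omega : k + 1 ≤ j + 1) hjl.le,
      hsplit Vbar (by omega : s ≤ j + 1) hjl.le]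
end
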